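/- arXiv:2107.07183 — 5 statements merged into one kernel-verified Lean document; each statement's English description precedes it below -/
import Mathlib

section
/- If f : 2^N → ℝ is a monotone submodular function and g : 2^N → ℝ is a non-negative down-monotone (i.e., g(S) ≥ g(T) for S ⊆ T) submodular function, and f is non-negative, then the pointwise product f·g is submodular. -/
theorem stmt1 {N : Type*} [DecidableEq N] (f g : Finset N → ℝ)
    (hfmono : ∀ S T : Finset N, S ⊆ T → f S ≤ f T)
    (hfsub : ∀ S T : Finset N, f (S ∪ T) + f (S ∩ T) ≤ f S + f T)
    (hfnn : ∀ S : Finset N, 0 ≤ f S)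
    (hgnn : ∀ S : Finset N, 0 ≤ g S)
    (hgdown : ∀ S T : Finset N, S ⊆ T → g T ≤ g S)
    (hgsub : ∀ S T : Finset N, g (S ∪ T) + g (S ∩ T) ≤ g S + g T) :
    ∀ S T : Finset N,
      f (S ∪ T) * g (S ∪ T) + f (S ∩ T) * g (S ∩ T) ≤ f S * g S + f T * g T := by
  intro S T
  have h1 := hfsub S T
  have h2 := hgsub S T
  have h3 := hfmono (S ∩ T) S Finset.inter_subset_left
  have h4 := hfmono (S ∩ T) T Finset.inter_subset_right
  have h5 := hgdown S (S ∪ T) Finset.subset_union_left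
  have h6 := hgdown T (S ∪ T) Finset.subset_union_right
  have h7 := hgnn (S ∪ T)
  have h8 := hfnn (S ∩ T)
  nlinarith [mul_nonneg (by linarith : (0:ℝ) ≤ f S + f T - f (S ∩ T) - f (S ∪ T)) h7,
    mul_nonneg (by linarith : (0:ℝ) ≤ f S - f (S ∩ T)) (by linarith : (0:ℝ) ≤ g S - g (S ∪ T)),
    mul_nonneg (by linarith : (0:ℝ) ≤ f T - f (S ∩ T)) (by linarith : (0:ℝ) ≤ g T - g (S ∪ T)),
    mul_nonneg h8 (by linarith : (0:ℝ) ≤ g S + g T - g (S ∩ T) - g (S ∪ T))]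
end

section
/- Let h : ℕ → ℝ be defined by h(0) = 1 and h(k) = (1 - α/k)·h(k-1) + 1 for k ≥ 1, where 0 < α < 1. Then h(k) ≤ (k + α + 1)/(α + 1) for all k ≥ 0, with strict inequality for k ≥ 1. -/
theorem stmt3 (α : ℝ) (hα0 : 0 < α) (hα1 : α < 1) (h : ℕ → ℝ)
    (h0 : h 0 = 1)
    (hrec : ∀ k : ℕ, 1 ≤ k → h k = (1 - α / (k : ℝ)) * h (k - 1) + 1) :
    (∀ k : ℕ, h k ≤ ((k : ℝ) + α + 1) / (α + 1)) ∧
    (∀ k : ℕ, 1 ≤ k → h k < ((k : ℝ) + α + 1) / (α + 1)) := by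
  have hα1' : (0:ℝ) < α + 1 := by linarith
  have key : ∀ k : ℕ, h k ≤ ((k : ℝ) + α + 1) / (α + 1) ∧
      (1 ≤ k → h k < ((k : ℝ) + α + 1) / (α + 1)) := by
    intro k
    induction k with
    | zero =>
      constructor
      · rw [h0, le_div_iff₀ hα1']; push_cast; linarith
      · omega
    | succ n ih =>
      have hk1 : (1:ℝ) ≤ (n:ℝ) + 1 := by linarith [(Nat.cast_nonneg n : (0:ℝ) ≤ n)]
      have hrecn := hrec (n+1) (by omega)
      simp only [Nat.add_sub_cancel, Nat.cast_add, Nat.cast_one] at hrecn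
      have hfac : 0 < 1 - α / ((n:ℝ) + 1) := by
        have : α / ((n:ℝ) + 1) ≤ α := by
          rw [div_le_iff₀ (by linarith)]
          nlinarith [hα0.le, (Nat.cast_nonneg n : (0:ℝ) ≤ n)]
        linarith
      have hle := ih.1
      have step : (1 - α / ((n:ℝ) + 1)) * h n + 1 <
          ((n:ℝ) + 1 + α + 1) / (α + 1) := by
        have h2 : (1 - α / ((n:ℝ) + 1)) * h n ≤
            (1 - α / ((n:ℝ) + 1)) * (((n:ℝ) + α + 1) / (α + 1)) :=
          mul_le_mul_of_nonneg_left hle hfac.le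
        have h3 : (1 - α / ((n:ℝ) + 1)) * (((n:ℝ) + α + 1) / (α + 1)) + 1 <
            ((n:ℝ) + 1 + α + 1) / (α + 1) := by
          have hn0 : (0:ℝ) < (n:ℝ) + 1 := by linarith
          rw [show (1 - α / ((n:ℝ) + 1)) * (((n:ℝ) + α + 1) / (α + 1)) + 1 =
              ((((n:ℝ) + 1 - α) * ((n:ℝ) + α + 1) + ((n:ℝ) + 1) * (α + 1)) /
                (((n:ℝ) + 1) * (α + 1))) from by field_simp,
            div_lt_div_iff₀ (by positivity) hα1']
          nlinarith [mul_pos hα0 hα1', mul_pos hn0 hα1', mul_pos hα0 hn0]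
        linarith
      have hlt : h (n+1) < ((n:ℝ) + 1 + α + 1) / (α + 1) := by
        rw [hrecn]; exact step
      refine ⟨?_, fun _ => by push_cast; exact hlt⟩
      push_cast; exact hlt.le
  exact ⟨fun k => (key k).1, fun k hk => (key k).2 hk⟩
end

section
/- Let f : 2^N → ℝ≥0 be a non-negative submodular function, let p ∈ [0,1], let x ∈ [0,1]^N with every coordinate at most p, and let S ⊆ N. Then the Lovász extension evaluated at x ∨ 1_S satisfies f_L(x ∨ 1_S) ≥ (1 - p)·f(S). -/
open scoped Classical in
theorem stmt8 {N : Type*} [Fintype N] [DecidableEq N] (f : Finset N → ℝ)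
    (hnn : ∀ S : Finset N, 0 ≤ f S)
    (hsub : ∀ S T : Finset N, f (S ∪ T) + f (S ∩ T) ≤ f S + f T)
    (p : ℝ) (hp : p ∈ Set.Icc (0 : ℝ) 1)
    (x : N → ℝ) (hx : ∀ i, x i ∈ Set.Icc (0 : ℝ) 1) (hxp : ∀ i, x i ≤ p)
    (S : Finset N) :
    (1 - p) * f S ≤
      ∫ t in (0 : ℝ)..1,
        f (Finset.univ.filter
          (fun u => t < (x ⊔ fun v => if v ∈ S then (1 : ℝ) else 0) u)) := by
  set χ : N → ℝ := fun v => if v ∈ S then (1 : ℝ) else 0 with hχ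
  set g : N → ℝ := x ⊔ χ with hg
  set F : ℝ → ℝ := fun t => f (Finset.univ.filter (fun u => t < g u)) with hFdef
  show (1 - p) * f S ≤ ∫ t in (0 : ℝ)..1, F t
  have hgu : ∀ u, g u = max (x u) (χ u) := fun u => rfl
  -- measurability of level-set fibers
  have hmeasA : ∀ T : Finset N,
      MeasurableSet {t : ℝ | Finset.univ.filter (fun u => t < g u) = T} := by
    intro T
    have hA : {t : ℝ | Finset.univ.filter (fun u => t < g u) = T}
        = ⋂ u : N, {t : ℝ | u ∈ T ↔ t < g u} := by
      ext t
      simp only [Set.mem_setOf_eq, Set.mem_iInter, Finset.ext_iff, Finset.mem_filter,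
        Finset.mem_univ, true_and]
      constructor
      · intro h u; exact (h u).symm
      · intro h u; exact (h u).symm
    rw [hA]
    refine MeasurableSet.iInter fun u => ?_
    by_cases hu : u ∈ T
    · simp only [hu, true_iff]
      exact measurableSet_Iio
    · simp only [hu, false_iff, not_lt]
      exact measurableSet_Ici
  have hFmeas : Measurable F := by
    have hFsum : F = fun t => ∑ T ∈ Finset.univ.powerset,
        Set.indicator {s : ℝ | Finset.univ.filter (fun u => s < g u) = T} (fun _ => f T) t := by
      funext t
      rw [Finset.sum_eq_single (Finset.univ.filter (fun u => t < g u))]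
      · rw [Set.indicator_of_mem]
        exact rfl
      · intro T _ hT
        exact Set.indicator_of_notMem (fun h => hT (Set.mem_setOf_eq ▸ h).symm) _
      · intro h
        exact absurd (Finset.mem_powerset.mpr (Finset.filter_subset _ _)) h
    rw [hFsum]
    exact Finset.measurable_sum _ fun T _ => measurable_const.indicator (hmeasA T)
  set C : ℝ := ∑ T ∈ Finset.univ.powerset, f T with hC
  have hFb : ∀ t, ‖F t‖ ≤ C := by
    intro t
    rw [Real.norm_eq_abs, abs_of_nonneg (hnn _)]
    exact Finset.single_le_sum (fun T _ => hnn T)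
      (Finset.mem_powerset.mpr (Finset.filter_subset _ _))
  have hInt : ∀ a b : ℝ, IntervalIntegrable F MeasureTheory.volume a b := by
    intro a b
    refine (intervalIntegrable_const (c := C)).mono_fun' hFmeas.aestronglyMeasurable ?_
    filter_upwards with t using hFb t
  have hsplit := intervalIntegral.integral_add_adjacent_intervals (hInt 0 p) (hInt p 1)
  have h1 : 0 ≤ ∫ t in (0:ℝ)..p, F t :=
    intervalIntegral.integral_nonneg hp.1 fun t _ => hnn _
  have h2 : (∫ t in p..(1:ℝ), F t) = (1 - p) * f S := by
    have hcong : (∫ t in p..(1:ℝ), F t) = ∫ t in p..(1:ℝ), f S := by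
      apply intervalIntegral.integral_congr_ae
      have hne : ∀ᵐ t : ℝ, t ≠ (1 : ℝ) := by
        rw [MeasureTheory.ae_iff]
        simpa using Real.volume_singleton (a := (1:ℝ))
      filter_upwards [hne] with t ht1 htmem
      rw [Set.uIoc_of_le hp.2] at htmem
      obtain ⟨hpt, ht1'⟩ := htmem
      have htlt : t < 1 := lt_of_le_of_ne ht1' ht1
      have hfil : Finset.univ.filter (fun u => t < g u) = S := by
        ext u
        simp only [Finset.mem_filter, Finset.mem_univ, true_and]
        constructor
        · intro h
          by_contra hu
          have hχu : χ u = 0 := if_neg hu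
          have : g u = x u := by
            rw [hgu u, hχu]
            exact max_eq_left (hx u).1
          rw [this] at h
          exact absurd h (not_lt.mpr ((hxp u).trans hpt.le))
        · intro hu
          have hχu : χ u = 1 := if_pos hu
          rw [hgu u, hχu]
          exact lt_of_lt_of_le htlt (le_max_right _ _)
      exact congrArg f hfil
    rw [hcong, intervalIntegral.integral_const, smul_eq_mul]
  linarith
end

section
/- Let f : 2^N → ℝ be submodular and F its multilinear extension. Then F(w) + F(y) ≥ F(w ∨ y) + F(w ∧ y) for all w, y ∈ [0,1]^N. -/
/-- The multilinear extension of a set function `f`. -/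
noncomputable def multilinearExt {N : Type*} [Fintype N] [DecidableEq N]
    (f : Finset N → ℝ) (x : N → ℝ) : ℝ :=
  ∑ S : Finset N, f S * (∏ u ∈ S, x u) * (∏ u ∈ Sᶜ, (1 - x u))

open Finset

/-- Multilinear extension restricted to a ground set `E`. -/
noncomputable def mG {N : Type*} [DecidableEq N] (E : Finset N)
    (f : Finset N → ℝ) (x : N → ℝ) : ℝ :=
  ∑ S ∈ E.powerset, f S * (∏ u ∈ S, x u) * (∏ u ∈ E \ S, (1 - x u))

lemma mG_insert {N : Type*} [DecidableEq N] {E : Finset N} {a : N} (ha : a ∉ E)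
    (f : Finset N → ℝ) (x : N → ℝ) :
    mG (insert a E) f x
      = x a * mG E (fun S => f (insert a S)) x + (1 - x a) * mG E f x := by
  unfold mG
  rw [Finset.sum_powerset_insert ha, Finset.mul_sum, Finset.mul_sum, add_comm]
  congr 1
  · apply Finset.sum_congr rfl
    intro S hS
    have hSE : S ⊆ E := Finset.mem_powerset.mp hS
    have haS : a ∉ S := fun h => ha (hSE h)
    have h1 : insert a E \ insert a S = E \ S := by
      ext b
      simp only [Finset.mem_insert, Finset.mem_sdiff, not_or]
      constructor
      · rintro ⟨h | h, h2, h3⟩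
        · exact absurd h h2
        · exact ⟨h, h3⟩
      · rintro ⟨h, h2⟩
        exact ⟨Or.inr h, fun hba => ha (hba ▸ h), h2⟩
    rw [h1, Finset.prod_insert haS]; ring
  · apply Finset.sum_congr rfl
    intro S hS
    have hSE : S ⊆ E := Finset.mem_powerset.mp hS
    have haS : a ∉ S := fun h => ha (hSE h)
    have h1 : insert a E \ S = insert a (E \ S) := by
      ext b
      simp only [Finset.mem_insert, Finset.mem_sdiff]
      constructor
      · rintro ⟨h | h, h2⟩
        · exact Or.inl h
        · exact Or.inr ⟨h, h2⟩
      · rintro (h | ⟨h, h2⟩)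
        · exact ⟨Or.inl h, h ▸ haS⟩
        · exact ⟨Or.inr h, h2⟩
    have h2 : a ∉ E \ S := fun h => ha (Finset.mem_sdiff.mp h).1
    rw [h1, Finset.prod_insert h2]; ring

lemma mG_mono_f {N : Type*} [DecidableEq N] {E : Finset N}
    {f g : Finset N → ℝ} {x : N → ℝ} (h : ∀ S, f S ≤ g S)
    (hx : ∀ i, x i ∈ Set.Icc (0 : ℝ) 1) :
    mG E f x ≤ mG E g x := by
  refine Finset.sum_le_sum fun S _ => ?_
  have hP : (0:ℝ) ≤ ∏ u ∈ S, x u := Finset.prod_nonneg fun u _ => (hx u).1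
  have hQ : (0:ℝ) ≤ ∏ u ∈ E \ S, (1 - x u) :=
    Finset.prod_nonneg fun u _ => by linarith [(hx u).2]
  exact mul_le_mul_of_nonneg_right (mul_le_mul_of_nonneg_right (h S) hP) hQ

lemma mG_sub_fun {N : Type*} [DecidableEq N] {E : Finset N}
    (f g : Finset N → ℝ) (x : N → ℝ) :
    mG E (fun S => f S - g S) x = mG E f x - mG E g x := by
  simp [mG, sub_mul, Finset.sum_sub_distrib]

/-- If `f` decreases when adding any element of `E`, then `mG E f` is antitone on `[0,1]^N`. -/
lemma mG_anti {N : Type*} [DecidableEq N] {E : Finset N} :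
    ∀ f : Finset N → ℝ, (∀ S, ∀ v ∈ E, f (insert v S) ≤ f S) →
    ∀ x x' : N → ℝ, (∀ i, x i ∈ Set.Icc (0 : ℝ) 1) → (∀ i, x' i ∈ Set.Icc (0 : ℝ) 1) →
    (∀ i, x i ≤ x' i) → mG E f x' ≤ mG E f x := by
  induction E using Finset.induction_on with
  | empty => intro f _ x x' _ _ _; simp [mG]
  | @insert a E ha ih =>
    intro f hf x x' hx hx' hle
    rw [mG_insert ha, mG_insert ha]
    set g := fun S => f (insert a S) with hgdef
    have hg : ∀ S, ∀ v ∈ E, g (insert v S) ≤ g S := by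
      intro S v hv
      have : f (insert v (insert a S)) ≤ f (insert a S) :=
        hf (insert a S) v (Finset.mem_insert_of_mem hv)
      simpa [hgdef, Finset.insert_comm] using this
    have hfE : ∀ S, ∀ v ∈ E, f (insert v S) ≤ f S :=
      fun S v hv => hf S v (Finset.mem_insert_of_mem hv)
    have ih1 := ih g hg x x' hx hx' hle
    have ih2 := ih f hfE x x' hx hx' hle
    have hgf : ∀ S, g S ≤ f S := fun S => hf S a (Finset.mem_insert_self a E)
    have h3 : mG E g x' ≤ mG E f x' := mG_mono_f hgf hx'
    have h0 : (0:ℝ) ≤ x a := (hx a).1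
    have h1 : x a ≤ x' a := hle a
    have h2 : x' a ≤ 1 := (hx' a).2
    nlinarith [mul_nonneg (by linarith : (0:ℝ) ≤ x' a - x a) (by linarith : (0:ℝ) ≤ mG E f x' - mG E g x'),
      mul_nonneg h0 (by linarith : (0:ℝ) ≤ mG E g x - mG E g x'),
      mul_nonneg (by linarith : (0:ℝ) ≤ 1 - x a) (by linarith : (0:ℝ) ≤ mG E f x - mG E f x')]

lemma mG_submod {N : Type*} [DecidableEq N] {E : Finset N} :
    ∀ f : Finset N → ℝ, (∀ S T, f (S ∪ T) + f (S ∩ T) ≤ f S + f T) →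
    ∀ w y : N → ℝ, (∀ i, w i ∈ Set.Icc (0 : ℝ) 1) → (∀ i, y i ∈ Set.Icc (0 : ℝ) 1) →
    mG E f (w ⊔ y) + mG E f (w ⊓ y) ≤ mG E f w + mG E f y := by
  induction E using Finset.induction_on with
  | empty => intro f _ w y _ _; simp [mG]
  | @insert a E ha ih =>
    intro f hsub w y hw hy
    have key : ∀ w y : N → ℝ, (∀ i, w i ∈ Set.Icc (0 : ℝ) 1) →
        (∀ i, y i ∈ Set.Icc (0 : ℝ) 1) → y a ≤ w a →
        mG (insert a E) f (w ⊔ y) + mG (insert a E) f (w ⊓ y)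
          ≤ mG (insert a E) f w + mG (insert a E) f y := by
      intro w y hw hy hya
      rw [mG_insert ha, mG_insert ha, mG_insert ha, mG_insert ha]
      have hsa : (w ⊔ y) a = w a := max_eq_left hya
      have hia : (w ⊓ y) a = y a := min_eq_right hya
      set g := fun S => f (insert a S) with hgdef
      have hsubg : ∀ S T, g (S ∪ T) + g (S ∩ T) ≤ g S + g T := by
        intro S T
        have hu : insert a S ∪ insert a T = insert a (S ∪ T) := by
          ext b; simp only [Finset.mem_insert, Finset.mem_union]; tauto
        have hi : insert a S ∩ insert a T = insert a (S ∩ T) := by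
          ext b; simp only [Finset.mem_insert, Finset.mem_inter]; tauto
        have := hsub (insert a S) (insert a T)
        rw [hu, hi] at this
        simpa [hgdef] using this
      have hsup_mem : ∀ i, (w ⊔ y) i ∈ Set.Icc (0:ℝ) 1 :=
        fun i => ⟨le_trans (hw i).1 (le_max_left _ _), max_le (hw i).2 (hy i).2⟩
      have hinf_mem : ∀ i, (w ⊓ y) i ∈ Set.Icc (0:ℝ) 1 :=
        fun i => ⟨le_min (hw i).1 (hy i).1, le_trans (min_le_left _ _) (hw i).2⟩
      have ih1 := ih g hsubg w y hw hy
      have ih2 := ih f hsub w y hw hy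
      -- marginal function h = g - f is antitone on coordinates in E
      have hh : ∀ S, ∀ v ∈ E, g (insert v S) - f (insert v S) ≤ g S - f S := by
        intro S v hv
        have hva : v ≠ a := fun h => ha (h ▸ hv)
        by_cases hvS : v ∈ S
        · rw [Finset.insert_eq_self.mpr hvS]
        · by_cases haS : a ∈ S
          · have e1 : insert a (insert v S) = insert v S :=
              Finset.insert_eq_self.mpr (Finset.mem_insert_of_mem haS)
            have e2 : insert a S = S := Finset.insert_eq_self.mpr haS
            simp [hgdef, e1, e2]
          · have hu : insert a S ∪ insert v S = insert a (insert v S) := by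
              ext b; simp only [Finset.mem_insert, Finset.mem_union]; tauto
            have hi : insert a S ∩ insert v S = S := by
              ext b
              simp only [Finset.mem_inter, Finset.mem_insert]
              constructor
              · rintro ⟨hb1 | hb1, hb2 | hb2⟩
                · exact absurd (hb1 ▸ hb2) (Ne.symm hva)
                · exact hb2
                · exact hb1
                · exact hb1
              · intro hb; exact ⟨Or.inr hb, Or.inr hb⟩
            have := hsub (insert a S) (insert v S)
            rw [hu, hi] at this
            simp only [hgdef]
            linarith
      have hanti : mG E (fun S => g S - f S) y ≤ mG E (fun S => g S - f S) (w ⊓ y) :=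
        mG_anti _ hh (w ⊓ y) y hinf_mem hy (fun i => min_le_right _ _)
      rw [mG_sub_fun, mG_sub_fun] at hanti
      rw [hsa, hia]
      have hy0 : (0:ℝ) ≤ y a := (hy a).1
      have hw1 : w a ≤ 1 := (hw a).2
      nlinarith [mul_nonneg (by linarith : (0:ℝ) ≤ w a)
          (by linarith : (0:ℝ) ≤ mG E g w + mG E g y - mG E g (w ⊔ y) - mG E g (w ⊓ y)),
        mul_nonneg (by linarith : (0:ℝ) ≤ 1 - w a)
          (by linarith : (0:ℝ) ≤ mG E f w + mG E f y - mG E f (w ⊔ y) - mG E f (w ⊓ y)),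
        mul_nonneg (by linarith : (0:ℝ) ≤ w a - y a)
          (by linarith : (0:ℝ) ≤ (mG E g (w ⊓ y) - mG E f (w ⊓ y)) - (mG E g y - mG E f y))]
    rcases le_total (y a) (w a) with hya | hya
    · exact key w y hw hy hya
    · have h := key y w hy hw hya
      rw [sup_comm, inf_comm] at h
      linarith

theorem stmt11 {N : Type*} [Fintype N] [DecidableEq N] (f : Finset N → ℝ)
    (hsub : ∀ S T : Finset N, f (S ∪ T) + f (S ∩ T) ≤ f S + f T)
    (w y : N → ℝ)
    (hw : ∀ i, w i ∈ Set.Icc (0 : ℝ) 1)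
    (hy : ∀ i, y i ∈ Set.Icc (0 : ℝ) 1) :
    multilinearExt f (w ⊔ y) + multilinearExt f (w ⊓ y)
      ≤ multilinearExt f w + multilinearExt f y := by
  have heq : ∀ x : N → ℝ, multilinearExt f x = mG Finset.univ f x := by
    intro x
    unfold multilinearExt mG
    rw [Finset.powerset_univ]
    exact Finset.sum_congr rfl fun S _ => by rw [Finset.compl_eq_univ_sdiff]
  rw [heq, heq, heq, heq]
  exact mG_submod f hsub w y hw hy
end

section
/- Let M be a matroid on ground set N, let I, J be independent sets of M, and let I₁, I₂ be a partition of I. Then there exists a partition J₁, J₂ of J such that I₁ ∪ J₂ and I₂ ∪ J₁ are both independent in M. -/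
set_option maxHeartbeats 4000000

open Finset

section Aux

variable {N : Type*} [DecidableEq N] (Indep : Finset N → Prop)

open scoped Classical in
/-- rank: max cardinality of an independent subset -/
noncomputable def mrk (A : Finset N) : ℕ :=
  (A.powerset.filter Indep).sup Finset.card

variable (hempty : Indep ∅)
    (hdown : ∀ S T : Finset N, S ⊆ T → Indep T → Indep S)
    (hexch : ∀ S T : Finset N, Indep S → Indep T → S.card < T.card →
      ∃ u ∈ T \ S, Indep (insert u S))

include hempty hdown hexch

set_option linter.unusedSectionVars false

open scoped Classical in
lemma le_mrk {S A : Finset N} (hS : Indep S) (h : S ⊆ A) : S.card ≤ mrk Indep A := by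
  apply Finset.le_sup
  simp [Finset.mem_filter, Finset.mem_powerset, h, hS]

open scoped Classical in
lemma exists_basis (A : Finset N) :
    ∃ B ⊆ A, Indep B ∧ B.card = mrk Indep A := by
  have hne : (A.powerset.filter Indep).Nonempty :=
    ⟨∅, by simp [Finset.mem_filter, hempty]⟩
  obtain ⟨B, hB, hBe⟩ := Finset.exists_mem_eq_sup _ hne Finset.card
  simp only [Finset.mem_filter, Finset.mem_powerset] at hB
  exact ⟨B, hB.1, hB.2, hBe.symm⟩

attribute [irreducible] mrk

lemma mrk_le_card (A : Finset N) : mrk Indep A ≤ A.card := by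
  obtain ⟨B, hBA, _, hcard⟩ := exists_basis Indep hempty hdown hexch A
  rw [← hcard]; exact Finset.card_le_card hBA

lemma mrk_mono {A B : Finset N} (h : A ⊆ B) : mrk Indep A ≤ mrk Indep B := by
  obtain ⟨C, hCA, hCi, hcard⟩ := exists_basis Indep hempty hdown hexch A
  rw [← hcard]; exact le_mrk Indep hempty hdown hexch hCi (hCA.trans h)

lemma mrk_of_indep {A : Finset N} (hA : Indep A) : mrk Indep A = A.card :=
  le_antisymm (mrk_le_card Indep hempty hdown hexch A) (le_mrk Indep hempty hdown hexch hA (subset_refl A))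

lemma indep_of_mrk_eq {A : Finset N} (h : A.card ≤ mrk Indep A) : Indep A := by
  obtain ⟨B, hBA, hBi, hcard⟩ := exists_basis Indep hempty hdown hexch A
  have : B = A := Finset.eq_of_subset_of_card_le hBA (by omega)
  rwa [← this]

lemma mrk_insert_le (e : N) (A : Finset N) :
    mrk Indep (insert e A) ≤ mrk Indep A + 1 := by
  obtain ⟨B, hBA, hBi, hcard⟩ := exists_basis Indep hempty hdown hexch (insert e A)
  rw [← hcard]
  have h1 : B.erase e ⊆ A := by
    intro x hx
    rcases Finset.mem_erase.mp hx with ⟨hxe, hxB⟩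
    rcases Finset.mem_insert.mp (hBA hxB) with h | h
    · exact absurd h hxe
    · exact h
  have h2 : (B.erase e).card ≤ mrk Indep A :=
    le_mrk Indep hempty hdown hexch (hdown _ _ (Finset.erase_subset _ _) hBi) h1
  have h3 : B.card ≤ (B.erase e).card + 1 := by
    by_cases he : e ∈ B
    · rw [Finset.card_erase_of_mem he]; omega
    · rw [Finset.erase_eq_of_notMem he]; omega
  omega

lemma exists_insert_indep {S A : Finset N} (hS : Indep S) (_hSA : S ⊆ A)
    (hlt : S.card < mrk Indep A) : ∃ u ∈ A, u ∉ S ∧ Indep (insert u S) := by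
  obtain ⟨B, hBA, hBi, hcard⟩ := exists_basis Indep hempty hdown hexch A
  obtain ⟨u, hu, hui⟩ := hexch S B hS hBi (by omega)
  rcases Finset.mem_sdiff.mp hu with ⟨huB, huS⟩
  exact ⟨u, hBA huB, huS, hui⟩

lemma exists_basis_superset {S A : Finset N} (hS : Indep S) (hSA : S ⊆ A) :
    ∃ B, S ⊆ B ∧ B ⊆ A ∧ Indep B ∧ B.card = mrk Indep A := by
  suffices h : ∀ n (S : Finset N), Indep S → S ⊆ A → mrk Indep A - S.card = n →
      ∃ B, S ⊆ B ∧ B ⊆ A ∧ Indep B ∧ B.card = mrk Indep A from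
    h _ S hS hSA rfl
  intro n
  induction n with
  | zero =>
    intro S hS hSA hn
    have hle : S.card ≤ mrk Indep A := le_mrk Indep hempty hdown hexch hS hSA
    exact ⟨S, subset_refl S, hSA, hS, by omega⟩
  | succ n ih =>
    intro S hS hSA hn
    have hle : S.card ≤ mrk Indep A := le_mrk Indep hempty hdown hexch hS hSA
    obtain ⟨u, huA, huS, hui⟩ := exists_insert_indep Indep hempty hdown hexch hS hSA (by omega)
    obtain ⟨B, h1, h2, h3, h4⟩ := ih (insert u S) hui (Finset.insert_subset huA hSA)
      (by rw [Finset.card_insert_of_notMem huS]; omega)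
    exact ⟨B, (Finset.subset_insert u S).trans h1, h2, h3, h4⟩

lemma mrk_submod (X Y : Finset N) :
    mrk Indep (X ∪ Y) + mrk Indep (X ∩ Y) ≤ mrk Indep X + mrk Indep Y := by
  obtain ⟨B0, hB0sub, hB0i, hB0c⟩ := exists_basis Indep hempty hdown hexch (X ∩ Y)
  obtain ⟨B, hB0B, hBsub, hBi, hBc⟩ := exists_basis_superset Indep hempty hdown hexch hB0i
    (hB0sub.trans (Finset.inter_subset_union))
  have h1 : (B ∩ X).card ≤ mrk Indep X :=
    le_mrk Indep hempty hdown hexch (hdown _ _ Finset.inter_subset_left hBi) Finset.inter_subset_right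
  have h2 : (B ∩ Y).card ≤ mrk Indep Y :=
    le_mrk Indep hempty hdown hexch (hdown _ _ Finset.inter_subset_left hBi) Finset.inter_subset_right
  have h3 : B0 ⊆ B ∩ (X ∩ Y) := Finset.subset_inter hB0B hB0sub
  have h4 : (B ∩ (X ∩ Y)).card ≥ mrk Indep (X ∩ Y) := by
    rw [← hB0c]; exact Finset.card_le_card h3
  have h5 : B ∩ (X ∪ Y) = B := Finset.inter_eq_left.mpr hBsub
  have key : (B ∩ X).card + (B ∩ Y).card
      = (B ∩ (X ∪ Y)).card + (B ∩ (X ∩ Y)).card := by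
    rw [← Finset.card_union_add_card_inter]
    congr 2
    · ext x; simp [Finset.mem_union, Finset.mem_inter]; tauto
    · ext x; simp [Finset.mem_inter]; tauto
  rw [h5] at key
  omega

/-- Two-matroid partition lemma, by induction on `|J|`. -/
lemma partition_lemma :
    ∀ n (J P Q : Finset N), J.card = n →
    (∀ A ⊆ J, A.card + mrk Indep P + mrk Indep Q ≤ mrk Indep (P ∪ A) + mrk Indep (Q ∪ A)) →
    ∃ J₁ J₂ : Finset N, J₁ ∪ J₂ = J ∧ Disjoint J₁ J₂ ∧
      mrk Indep P + J₂.card ≤ mrk Indep (P ∪ J₂) ∧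
      mrk Indep Q + J₁.card ≤ mrk Indep (Q ∪ J₁) := by
  intro n
  induction n with
  | zero =>
    intro J P Q hcard _
    have : J = ∅ := Finset.card_eq_zero.mp hcard
    subst this
    exact ⟨∅, ∅, by simp, by simp, by simp, by simp⟩
  | succ n ih =>
    intro J P Q hcard hyp
    obtain ⟨e, he⟩ : J.Nonempty := Finset.card_pos.mp (by omega)
    set J' := J.erase e with hJ'
    have hJ'card : J'.card = n := by
      rw [hJ', Finset.card_erase_of_mem he]; omega
    have hJ'sub : J' ⊆ J := Finset.erase_subset _ _
    by_cases hD1 : ∀ A ⊆ J', A.card + (mrk Indep P + 1) + mrk Indep Q ≤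
        mrk Indep (insert e P ∪ A) + mrk Indep (Q ∪ A)
    · -- contract e into P
      have hPe : mrk Indep P + 1 ≤ mrk Indep (insert e P) := by
        have := hD1 ∅ (Finset.empty_subset _)
        simp only [Finset.card_empty, Finset.union_empty] at this
        omega
      obtain ⟨J₁', J₂', hu, hd, hP, hQ⟩ := ih J' (insert e P) Q hJ'card (by
        intro A hA
        have h1 := hD1 A hA
        have h2 : mrk Indep (insert e P) ≤ mrk Indep P + 1 :=
          mrk_insert_le Indep hempty hdown hexch e P
        omega)
      have hJ₂'sub : J₂' ⊆ J' := by rw [← hu]; exact Finset.subset_union_right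
      have hJ₁'sub : J₁' ⊆ J' := by rw [← hu]; exact Finset.subset_union_left
      have heJ₂' : e ∉ J₂' := fun h => (Finset.notMem_erase e J) (hJ₂'sub h)
      have heJ₁' : e ∉ J₁' := fun h => (Finset.notMem_erase e J) (hJ₁'sub h)
      refine ⟨J₁', insert e J₂', ?_, ?_, ?_, hQ⟩
      · rw [Finset.union_insert, hu]
        exact Finset.insert_erase he
      · exact Finset.disjoint_insert_right.mpr ⟨heJ₁', hd⟩
      · have hset : insert e P ∪ J₂' = P ∪ insert e J₂' := by
          ext x; simp only [Finset.mem_union, Finset.mem_insert]; tauto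
        rw [← hset, Finset.card_insert_of_notMem heJ₂']
        omega
    · by_cases hD2 : ∀ A ⊆ J', A.card + mrk Indep P + (mrk Indep Q + 1) ≤
          mrk Indep (P ∪ A) + mrk Indep (insert e Q ∪ A)
      · -- contract e into Q
        have hQe : mrk Indep Q + 1 ≤ mrk Indep (insert e Q) := by
          have := hD2 ∅ (Finset.empty_subset _)
          simp only [Finset.card_empty, Finset.union_empty] at this
          omega
        obtain ⟨J₁', J₂', hu, hd, hP, hQ⟩ := ih J' P (insert e Q) hJ'card (by
          intro A hA
          have h1 := hD2 A hA
          have h2 : mrk Indep (insert e Q) ≤ mrk Indep Q + 1 :=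
            mrk_insert_le Indep hempty hdown hexch e Q
          omega)
        have hJ₂'sub : J₂' ⊆ J' := by rw [← hu]; exact Finset.subset_union_right
        have hJ₁'sub : J₁' ⊆ J' := by rw [← hu]; exact Finset.subset_union_left
        have heJ₁' : e ∉ J₁' := fun h => (Finset.notMem_erase e J) (hJ₁'sub h)
        refine ⟨insert e J₁', J₂', ?_, ?_, hP, ?_⟩
        · rw [Finset.insert_union, hu]
          exact Finset.insert_erase he
        · exact Finset.disjoint_insert_left.mpr ⟨fun h => (Finset.notMem_erase e J) (hJ₂'sub h), hd⟩
        · have hset : insert e Q ∪ J₁' = Q ∪ insert e J₁' := by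
            ext x; simp only [Finset.mem_union, Finset.mem_insert]; tauto
          rw [← hset, Finset.card_insert_of_notMem heJ₁']
          omega
      · -- both fail: contradiction
        exfalso
        push_neg at hD1 hD2
        obtain ⟨A₁, hA₁sub, hA₁⟩ := hD1
        obtain ⟨A₂, hA₂sub, hA₂⟩ := hD2
        have heA₁ : e ∉ A₁ := fun h => Finset.notMem_erase e J (hA₁sub h)
        have heA₂ : e ∉ A₂ := fun h => Finset.notMem_erase e J (hA₂sub h)
        set U := insert e (A₁ ∪ A₂) with hU
        have hUsub : U ⊆ J := by
          rw [hU]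
          exact Finset.insert_subset he
            (Finset.union_subset (hA₁sub.trans hJ'sub) (hA₂sub.trans hJ'sub))
        have f7 := hyp U hUsub
        have hUcard : U.card = (A₁ ∪ A₂).card + 1 := by
          rw [hU, Finset.card_insert_of_notMem (by
            simp only [Finset.mem_union]; tauto)]
        -- submodularity 1
        have g1 : mrk Indep (P ∪ U) + mrk Indep (P ∪ (A₁ ∩ A₂)) ≤
            mrk Indep (insert e P ∪ A₁) + mrk Indep (P ∪ A₂) := by
          have hsub := mrk_submod Indep hempty hdown hexch (insert e P ∪ A₁) (P ∪ A₂)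
          have e1 : (insert e P ∪ A₁) ∪ (P ∪ A₂) = P ∪ U := by
            ext x; simp only [hU, Finset.mem_union, Finset.mem_insert]; tauto
          have e2 : P ∪ (A₁ ∩ A₂) ⊆ (insert e P ∪ A₁) ∩ (P ∪ A₂) := by
            intro x hx
            simp only [Finset.mem_union, Finset.mem_inter, Finset.mem_insert] at hx ⊢
            tauto
          have e3 : mrk Indep (P ∪ (A₁ ∩ A₂)) ≤ mrk Indep ((insert e P ∪ A₁) ∩ (P ∪ A₂)) :=
            mrk_mono Indep hempty hdown hexch e2
          rw [e1] at hsub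
          omega
        -- submodularity 2
        have g2 : mrk Indep (Q ∪ U) + mrk Indep (Q ∪ (A₁ ∩ A₂)) ≤
            mrk Indep (insert e Q ∪ A₂) + mrk Indep (Q ∪ A₁) := by
          have hsub := mrk_submod Indep hempty hdown hexch (insert e Q ∪ A₂) (Q ∪ A₁)
          have e1 : (insert e Q ∪ A₂) ∪ (Q ∪ A₁) = Q ∪ U := by
            ext x; simp only [hU, Finset.mem_union, Finset.mem_insert]; tauto
          have e2 : Q ∪ (A₁ ∩ A₂) ⊆ (insert e Q ∪ A₂) ∩ (Q ∪ A₁) := by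
            intro x hx
            simp only [Finset.mem_union, Finset.mem_inter, Finset.mem_insert] at hx ⊢
            tauto
          have e3 : mrk Indep (Q ∪ (A₁ ∩ A₂)) ≤ mrk Indep ((insert e Q ∪ A₂) ∩ (Q ∪ A₁)) :=
            mrk_mono Indep hempty hdown hexch e2
          rw [e1] at hsub
          omega
        have f8 := hyp (A₁ ∩ A₂) ((Finset.inter_subset_left).trans (hA₁sub.trans hJ'sub))
        have hcards : (A₁ ∪ A₂).card + (A₁ ∩ A₂).card = A₁.card + A₂.card :=
          Finset.card_union_add_card_inter A₁ A₂
        omega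

end Aux

theorem stmt12 {N : Type*} [DecidableEq N]
    (Indep : Finset N → Prop)
    (hempty : Indep ∅)
    (hdown : ∀ S T : Finset N, S ⊆ T → Indep T → Indep S)
    (hexch : ∀ S T : Finset N, Indep S → Indep T → S.card < T.card →
      ∃ u ∈ T \ S, Indep (insert u S))
    (I J I₁ I₂ : Finset N) (hI : Indep I) (hJ : Indep J)
    (hpart : I₁ ∪ I₂ = I) (hdisj : Disjoint I₁ I₂) :
    ∃ J₁ J₂ : Finset N, J₁ ∪ J₂ = J ∧ Disjoint J₁ J₂ ∧
      Indep (I₁ ∪ J₂) ∧ Indep (I₂ ∪ J₁) := by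
  subst hpart
  set I := I₁ ∪ I₂ with hI_def
  have hI₁ : Indep I₁ := hdown _ _ Finset.subset_union_left hI
  have hI₂ : Indep I₂ := hdown _ _ Finset.subset_union_right hI
  have hrkI₁ : mrk Indep I₁ = I₁.card := mrk_of_indep Indep hempty hdown hexch hI₁
  have hrkI₂ : mrk Indep I₂ = I₂.card := mrk_of_indep Indep hempty hdown hexch hI₂
  -- apply partition lemma to J \ I
  obtain ⟨J₁', J₂', hu, hd, hP, hQ⟩ := partition_lemma Indep hempty hdown hexch
    (J \ I).card (J \ I) I₁ I₂ rfl (by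
      intro A hA
      have hAJ : A ⊆ J := hA.trans (Finset.sdiff_subset)
      have hAindep : Indep A := hdown _ _ hAJ hJ
      have hsub := mrk_submod Indep hempty hdown hexch (I₁ ∪ A) (I₂ ∪ A)
      have e1 : (I₁ ∪ A) ∪ (I₂ ∪ A) = I ∪ A := by
        ext x; simp only [hI_def, Finset.mem_union]; tauto
      have e2 : (I₁ ∪ A) ∩ (I₂ ∪ A) = A := by
        ext x
        simp only [Finset.mem_inter, Finset.mem_union]
        constructor
        · rintro ⟨h1 | h1, h2 | h2⟩ <;> try assumption
          exact absurd h2 (Finset.disjoint_left.mp hdisj h1)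
        · intro h; exact ⟨Or.inr h, Or.inr h⟩
      rw [e1, e2] at hsub
      have h3 : I.card ≤ mrk Indep (I ∪ A) := by
        rw [← mrk_of_indep Indep hempty hdown hexch hI]
        exact mrk_mono Indep hempty hdown hexch Finset.subset_union_left
      have h4 : mrk Indep A = A.card := mrk_of_indep Indep hempty hdown hexch hAindep
      have h5 : I.card = I₁.card + I₂.card := Finset.card_union_of_disjoint hdisj
      omega)
  -- from rank inequalities to independence
  have hind₁ : Indep (I₁ ∪ J₂') := by
    apply indep_of_mrk_eq Indep hempty hdown hexch
    have h1 : (I₁ ∪ J₂').card ≤ I₁.card + J₂'.card := Finset.card_union_le _ _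
    omega
  have hind₂ : Indep (I₂ ∪ J₁') := by
    apply indep_of_mrk_eq Indep hempty hdown hexch
    have h1 : (I₂ ∪ J₁').card ≤ I₂.card + J₁'.card := Finset.card_union_le _ _
    omega
  -- add back J ∩ I elements
  refine ⟨J₁' ∪ (J ∩ I₂), J₂' ∪ (J ∩ I₁), ?_, ?_, ?_, ?_⟩
  · have := hu
    ext x
    have hx := Finset.ext_iff.mp hu x
    simp only [Finset.mem_union, Finset.mem_inter, Finset.mem_sdiff, hI_def,
      Finset.mem_union] at hx ⊢
    by_cases hxI₁ : x ∈ I₁ <;> by_cases hxI₂ : x ∈ I₂ <;> tauto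
  · rw [Finset.disjoint_left]
    intro x hx1 hx2
    have hJ₁'s : J₁' ⊆ J \ I := by rw [← hu]; exact Finset.subset_union_left
    have hJ₂'s : J₂' ⊆ J \ I := by rw [← hu]; exact Finset.subset_union_right
    simp only [Finset.mem_union, Finset.mem_inter] at hx1 hx2
    rcases hx1 with h1 | h1 <;> rcases hx2 with h2 | h2
    · exact Finset.disjoint_left.mp hd h1 h2
    · exact (Finset.mem_sdiff.mp (hJ₁'s h1)).2 (by simp [hI_def, h2.2])
    · exact (Finset.mem_sdiff.mp (hJ₂'s h2)).2 (by simp [hI_def, h1.2])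
    · exact Finset.disjoint_left.mp hdisj h2.2 h1.2
  · have e : I₁ ∪ (J₂' ∪ (J ∩ I₁)) = I₁ ∪ J₂' := by
      ext x; simp only [Finset.mem_union, Finset.mem_inter]; tauto
    rw [e]; exact hind₁
  · have e : I₂ ∪ (J₁' ∪ (J ∩ I₂)) = I₂ ∪ J₁' := by
      ext x; simp only [Finset.mem_union, Finset.mem_inter]; tauto
    rw [e]; exact hind₂
end
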